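/- Define f, g : ℝ → ℝ by f(x) = exp(1/x) and g(x) = exp(−1/x²) for x < 0, and f(x) = g(x) = 0 for x ≥ 0. Let F ⊆ ℝ² be the union of the graphs of f and −f, and G ⊆ ℝ² the union of the graphs of g and −g. Then every homeomorphism φ : ℝ² → ℝ² with φ(F) = G satisfies φ(0,0) = (0,0). -/
import Mathlib


/-- `f x = exp (1/x)` for `x < 0`, and `0` for `x ≥ 0`. -/
noncomputable def f (x : ℝ) : ℝ := if x < 0 then Real.exp (1 / x) else 0

/-- `g x = exp (-1/x²)` for `x < 0`, and `0` for `x ≥ 0`. -/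
noncomputable def g (x : ℝ) : ℝ := if x < 0 then Real.exp (-1 / x ^ 2) else 0

/-- `F` is the union of the graphs of `f` and `-f`. -/
noncomputable def F : Set (ℝ × ℝ) := {p | p.2 = f p.1 ∨ p.2 = -f p.1}

/-- `G` is the union of the graphs of `g` and `-g`. -/
noncomputable def G : Set (ℝ × ℝ) := {p | p.2 = g p.1 ∨ p.2 = -g p.1}

lemma g_nonneg (x : ℝ) : 0 ≤ g x := by
  unfold g; split
  · exact (Real.exp_pos _).le
  · exact le_refl 0

lemma g_pos {x : ℝ} (hx : x < 0) : 0 < g x := by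
  unfold g; rw [if_pos hx]; exact Real.exp_pos _

lemma g_zero {x : ℝ} (hx : 0 ≤ x) : g x = 0 := by
  unfold g; rw [if_neg (not_lt.2 hx)]

lemma g_le_sq (x : ℝ) : g x ≤ x ^ 2 := by
  unfold g; split
  · rename_i hx
    have hx0 : x ≠ 0 := ne_of_lt hx
    have hx2 : 0 < x ^ 2 := by positivity
    have h1 : (-1 : ℝ) / x ^ 2 = -((x ^ 2)⁻¹) := by field_simp
    rw [h1, Real.exp_neg, inv_le_comm₀ (Real.exp_pos _) hx2]
    linarith [Real.add_one_le_exp ((x ^ 2)⁻¹), inv_nonneg.2 hx2.le]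
  · positivity

lemma g_cont : Continuous g := by
  rw [continuous_iff_continuousAt]
  intro x
  rcases lt_trichotomy x 0 with hx | hx | hx
  · have : ∀ᶠ y in nhds x, g y = Real.exp (-1 / y ^ 2) := by
      filter_upwards [eventually_lt_nhds hx] with y hy
      simp [g, hy]
    refine ContinuousAt.congr ?_ (this.mono fun y h => h.symm)
    have hx0 : x ≠ 0 := ne_of_lt hx
    have hy2 : x ^ 2 ≠ 0 := by positivity
    exact (Real.continuous_exp.continuousAt).comp
      ((continuousAt_const.div (continuousAt_pow x 2) hy2))
  · subst hx
    have h0 : g 0 = 0 := g_zero le_rfl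
    rw [ContinuousAt, h0]
    exact squeeze_zero (fun y => g_nonneg y) (fun y => g_le_sq y)
      (by simpa using (continuous_pow 2).tendsto (0:ℝ))
  · have : ∀ᶠ y in nhds x, g y = 0 := by
      filter_upwards [eventually_gt_nhds hx] with y hy
      simp [g, not_lt.2 hy.le]
    exact (continuousAt_const (y := (0:ℝ))).congr (this.mono fun y h => h.symm)

lemma f_pos {x : ℝ} (hx : x < 0) : 0 < f x := by
  unfold f; rw [if_pos hx]; exact Real.exp_pos _

lemma f_zero {x : ℝ} (hx : 0 ≤ x) : f x = 0 := by
  unfold f; rw [if_neg (not_lt.2 hx)]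

/-- membership in a graph over a set -/
lemma mem_gr {h : ℝ → ℝ} {s : Set ℝ} {p : ℝ × ℝ} :
    p ∈ (fun x => (x, h x)) '' s ↔ p.1 ∈ s ∧ p.2 = h p.1 := by
  constructor
  · rintro ⟨x, hx, rfl⟩; exact ⟨hx, rfl⟩
  · rintro ⟨h1, h2⟩; exact ⟨p.1, h1, by ext <;> simp [h2.symm]⟩

lemma gr_conn (h : ℝ → ℝ) (hc : Continuous h) {s : Set ℝ} (hs : IsPreconnected s) :
    IsPreconnected ((fun x => (x, h x)) '' s) :=
  hs.image _ (continuous_id.prodMk hc).continuousOn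


/-- Every homeomorphism of `ℝ²` taking `F` to `G` fixes the origin. -/
theorem homeo_F_to_G_fixes_origin (φ : (ℝ × ℝ) ≃ₜ (ℝ × ℝ)) (hφ : φ '' F = G) :
    φ ((0 : ℝ), (0 : ℝ)) = ((0 : ℝ), (0 : ℝ)) := by
  by_contra hne
  set q : ℝ × ℝ := φ ((0:ℝ), (0:ℝ)) with hqdef
  have horig : ((0:ℝ), (0:ℝ)) ∈ F := Or.inl (by simp [f_zero le_rfl])
  have hqG : q ∈ G := hφ ▸ Set.mem_image_of_mem φ horig
  -- the punctured sets
  set t : Set (ℝ × ℝ) := G \ {q} with htdef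
  have himg : φ '' (F \ {((0:ℝ), (0:ℝ))}) = t := by
    rw [Set.image_diff φ.injective, Set.image_singleton, hφ]
  -- the three open traces
  set O1 : Set (ℝ × ℝ) := {p | 0 < p.2} with hO1
  set O2 : Set (ℝ × ℝ) := {p | p.2 < 0} with hO2
  set O3 : Set (ℝ × ℝ) := {p | 0 < p.1} with hO3
  set P1 : Set (ℝ × ℝ) := φ '' O1 with hP1
  set P2 : Set (ℝ × ℝ) := φ '' O2 with hP2
  set P3 : Set (ℝ × ℝ) := φ '' O3 with hP3
  have hP1o : IsOpen P1 := φ.isOpenMap _ (isOpen_lt continuous_const continuous_snd)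
  have hP2o : IsOpen P2 := φ.isOpenMap _ (isOpen_lt continuous_snd continuous_const)
  have hP3o : IsOpen P3 := φ.isOpenMap _ (isOpen_lt continuous_const continuous_fst)
  -- F-points in the traces
  have hFO : ∀ r : ℝ × ℝ, r ∈ F → r ≠ ((0:ℝ),(0:ℝ)) →
      (r ∈ O1 ∧ r ∉ O2 ∧ r ∉ O3) ∨ (r ∈ O2 ∧ r ∉ O1 ∧ r ∉ O3) ∨
      (r ∈ O3 ∧ r ∉ O1 ∧ r ∉ O2) := by
    intro r hr hr0
    rcases lt_trichotomy r.1 0 with h1 | h1 | h1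
    · have hf := f_pos h1
      rcases hr with h2 | h2
      · exact Or.inl ⟨by simpa [hO1, h2] using hf,
          by simp [hO2, h2]; linarith, by simp [hO3]; linarith⟩
      · exact Or.inr (Or.inl ⟨by simp [hO2, h2]; linarith,
          by simp [hO1, h2]; linarith, by simp [hO3]; linarith⟩)
    · exfalso
      have hf : f r.1 = 0 := f_zero h1.ge
      have : r.2 = 0 := by rcases hr with h2 | h2 <;> simp [h2, hf]
      exact hr0 (Prod.ext h1 this)
    · have hf : f r.1 = 0 := f_zero h1.le
      have h2 : r.2 = 0 := by rcases hr with h2 | h2 <;> simp [h2, hf]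
      exact Or.inr (Or.inr ⟨h1, by simp [hO1, h2], by simp [hO2, h2]⟩)
  -- cover of t by P1 ∪ P2 ∪ P3
  have hcov : t ⊆ P1 ∪ P2 ∪ P3 := by
    intro p hp
    have hp' : p ∈ φ '' (F \ {((0:ℝ),(0:ℝ))}) := himg ▸ hp
    obtain ⟨r, ⟨hrF, hr0⟩, rfl⟩ := hp'
    rcases hFO r hrF (by simpa using hr0) with ⟨h, _⟩ | ⟨h, _⟩ | ⟨h, _⟩
    · exact Or.inl (Or.inl (Set.mem_image_of_mem φ h))
    · exact Or.inl (Or.inr (Set.mem_image_of_mem φ h))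
    · exact Or.inr (Set.mem_image_of_mem φ h)
  -- pairwise disjointness on t
  have hdisj : ∀ p ∈ t, ¬(p ∈ P1 ∧ p ∈ P2) ∧ ¬(p ∈ P1 ∧ p ∈ P3) ∧ ¬(p ∈ P2 ∧ p ∈ P3) := by
    intro p hp
    have hp' : p ∈ φ '' (F \ {((0:ℝ),(0:ℝ))}) := himg ▸ hp
    obtain ⟨r, ⟨hrF, hr0⟩, rfl⟩ := hp'
    have key : ∀ i : Set (ℝ × ℝ), φ r ∈ φ '' i → r ∈ i := by
      rintro i ⟨s, hs, he⟩
      rwa [← φ.injective he]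
    have hex := hFO r hrF (by simpa using hr0)
    refine ⟨?_, ?_, ?_⟩ <;> rintro ⟨ha, hb⟩ <;>
      [skip; skip; skip] <;>
      · have h1 := key _ ha
        have h2 := key _ hb
        tauto
  -- nonemptiness of the three pieces
  have hmemt : ∀ r : ℝ × ℝ, r ∈ F → r ≠ ((0:ℝ),(0:ℝ)) → φ r ∈ t := by
    intro r h1 h2
    rw [← himg]
    exact ⟨r, ⟨h1, by simpa using h2⟩, rfl⟩
  have hr1F : ((-1:ℝ), f (-1)) ∈ F := Or.inl rfl
  have hr2F : ((-1:ℝ), -f (-1)) ∈ F := Or.inr rfl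
  have hr3F : ((1:ℝ), (0:ℝ)) ∈ F := Or.inl (by simp [f_zero (by norm_num : (0:ℝ) ≤ 1)])
  have hfneg : 0 < f (-1) := f_pos (by norm_num)
  have ha : φ ((-1:ℝ), f (-1)) ∈ t ∧ φ ((-1:ℝ), f (-1)) ∈ P1 :=
    ⟨hmemt _ hr1F (by intro h; have := congrArg Prod.fst h; norm_num at this),
     Set.mem_image_of_mem φ (by simpa [hO1] using hfneg)⟩
  have hb : φ ((-1:ℝ), -f (-1)) ∈ t ∧ φ ((-1:ℝ), -f (-1)) ∈ P2 :=
    ⟨hmemt _ hr2F (by intro h; have := congrArg Prod.fst h; norm_num at this),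
     Set.mem_image_of_mem φ (by simp [hO2]; linarith)⟩
  have hc : φ ((1:ℝ), (0:ℝ)) ∈ t ∧ φ ((1:ℝ), (0:ℝ)) ∈ P3 :=
    ⟨hmemt _ hr3F (by intro h; have := congrArg Prod.fst h; norm_num at this),
     Set.mem_image_of_mem φ (by simp [hO3])⟩
  -- there is no cover of t by two preconnected subsets
  have sep2 : ∀ (s O O' : Set (ℝ × ℝ)), IsPreconnected s → IsOpen O → IsOpen O' →
      s ⊆ O ∪ O' → (∀ p ∈ s, ¬(p ∈ O ∧ p ∈ O')) →
      (∃ x ∈ s, x ∈ O) → (∃ y ∈ s, y ∈ O') → False := by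
    intro s O O' hs hO hO' hsub hd hx hy
    obtain ⟨z, hz⟩ := hs O O' hO hO' hsub
      (by obtain ⟨x, h1, h2⟩ := hx; exact ⟨x, h1, h2⟩)
      (by obtain ⟨y, h1, h2⟩ := hy; exact ⟨y, h1, h2⟩)
    exact hd z hz.1 ⟨hz.2.1, hz.2.2⟩
  have meet2 : ∀ s : Set (ℝ × ℝ), IsPreconnected s → s ⊆ t →
      ∀ x ∈ s, ∀ y ∈ s,
      ((x ∈ P1 ∧ y ∈ P2) ∨ (x ∈ P1 ∧ y ∈ P3) ∨ (x ∈ P2 ∧ y ∈ P3)) → False := by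
    intro s hs hst x hx y hy hcase
    have cov1 : s ⊆ P1 ∪ (P2 ∪ P3) := fun p hp => by
      rcases hcov (hst hp) with (h | h) | h
      · exact Or.inl h
      · exact Or.inr (Or.inl h)
      · exact Or.inr (Or.inr h)
    have cov2 : s ⊆ P2 ∪ (P1 ∪ P3) := fun p hp => by
      rcases hcov (hst hp) with (h | h) | h
      · exact Or.inr (Or.inl h)
      · exact Or.inl h
      · exact Or.inr (Or.inr h)
    have dis1 : ∀ p ∈ s, ¬(p ∈ P1 ∧ p ∈ P2 ∪ P3) := by
      rintro p hp ⟨hpa, hpb | hpb⟩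
      · exact (hdisj p (hst hp)).1 ⟨hpa, hpb⟩
      · exact (hdisj p (hst hp)).2.1 ⟨hpa, hpb⟩
    have dis2 : ∀ p ∈ s, ¬(p ∈ P2 ∧ p ∈ P1 ∪ P3) := by
      rintro p hp ⟨hpa, hpb | hpb⟩
      · exact (hdisj p (hst hp)).1 ⟨hpb, hpa⟩
      · exact (hdisj p (hst hp)).2.2 ⟨hpa, hpb⟩
    rcases hcase with ⟨h1, h2⟩ | ⟨h1, h2⟩ | ⟨h1, h2⟩
    · exact sep2 s P1 (P2 ∪ P3) hs hP1o (hP2o.union hP3o) cov1 dis1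
        ⟨x, hx, h1⟩ ⟨y, hy, Or.inl h2⟩
    · exact sep2 s P1 (P2 ∪ P3) hs hP1o (hP2o.union hP3o) cov1 dis1
        ⟨x, hx, h1⟩ ⟨y, hy, Or.inr h2⟩
    · exact sep2 s P2 (P1 ∪ P3) hs hP2o (hP1o.union hP3o) cov2 dis2
        ⟨x, hx, h1⟩ ⟨y, hy, Or.inr h2⟩
  have final : ∀ U V : Set (ℝ × ℝ), IsPreconnected U → IsPreconnected V →
      U ⊆ t → V ⊆ t → t ⊆ U ∪ V → False := by
    intro U V hUc hVc hUt hVt hUV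
    rcases hUV ha.1 with h1 | h1 <;> rcases hUV hb.1 with h2 | h2 <;>
      rcases hUV hc.1 with h3 | h3 <;>
      first
      | exact meet2 U hUc hUt _ h1 _ h2 (Or.inl ⟨ha.2, hb.2⟩)
      | exact meet2 V hVc hVt _ h1 _ h2 (Or.inl ⟨ha.2, hb.2⟩)
      | exact meet2 U hUc hUt _ h1 _ h3 (Or.inr (Or.inl ⟨ha.2, hc.2⟩))
      | exact meet2 V hVc hVt _ h1 _ h3 (Or.inr (Or.inl ⟨ha.2, hc.2⟩))
      | exact meet2 U hUc hUt _ h2 _ h3 (Or.inr (Or.inr ⟨hb.2, hc.2⟩))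
      | exact meet2 V hVc hVt _ h2 _ h3 (Or.inr (Or.inr ⟨hb.2, hc.2⟩))
  -- now case analysis on q ∈ G \ {(0,0)} : produce a two-piece connected cover of t
  clear ha hb hc hdisj hcov hFO hmemt hr1F hr2F hr3F sep2 meet2
  rcases lt_trichotomy q.1 0 with hq1 | hq1 | hq1
  · -- q on one of the wings
    rcases hqG with hq2 | hq2
    · -- q = (q.1, g q.1), upper wing
      refine final ((fun x => (x, g x)) '' Set.Iio q.1)
        ((fun x => (x, g x)) '' Set.Ioi q.1 ∪ (fun x => (x, -g x)) '' Set.univ)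
        (gr_conn g g_cont isPreconnected_Iio)
        (IsPreconnected.union ((1:ℝ), (0:ℝ))
          (mem_gr.2 ⟨by simpa using hq1.trans zero_lt_one, (g_zero (by norm_num)).symm⟩)
          (mem_gr.2 ⟨trivial, by simp [g_zero (by norm_num : (0:ℝ) ≤ 1)]⟩)
          (gr_conn g g_cont isPreconnected_Ioi)
          (gr_conn _ g_cont.neg isPreconnected_univ)) ?_ ?_ ?_
      · rintro p hp
        rw [mem_gr] at hp
        refine ⟨Or.inl hp.2, ?_⟩
        intro h
        rw [Set.mem_singleton_iff] at h
        rw [h] at hp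
        exact absurd hp.1 (by simp)
      · rintro p (hp | hp) <;> rw [mem_gr] at hp
        · refine ⟨Or.inl hp.2, ?_⟩
          intro h
          rw [Set.mem_singleton_iff] at h
          rw [h] at hp
          exact absurd hp.1 (by simp)
        · refine ⟨Or.inr hp.2, ?_⟩
          intro h
          rw [Set.mem_singleton_iff] at h
          rw [h] at hp
          have := g_pos hq1
          rw [hp.2] at hq2
          linarith
      · rintro p ⟨hpG, hpq⟩
        rcases hpG with h | h
        · rcases lt_trichotomy p.1 q.1 with h1 | h1 | h1
          · exact Or.inl (mem_gr.2 ⟨h1, h⟩)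
          · exact absurd (Prod.ext h1 (by rw [h, h1, ← hq2])) (by simpa using hpq)
          · exact Or.inr (Or.inl (mem_gr.2 ⟨h1, h⟩))
        · exact Or.inr (Or.inr (mem_gr.2 ⟨trivial, h⟩))
    · -- q = (q.1, -g q.1), lower wing
      refine final ((fun x => (x, -g x)) '' Set.Iio q.1)
        ((fun x => (x, -g x)) '' Set.Ioi q.1 ∪ (fun x => (x, g x)) '' Set.univ)
        (gr_conn _ g_cont.neg isPreconnected_Iio)
        (IsPreconnected.union ((1:ℝ), (0:ℝ))
          (mem_gr.2 ⟨by simpa using hq1.trans zero_lt_one,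
            by simp [g_zero (by norm_num : (0:ℝ) ≤ 1)]⟩)
          (mem_gr.2 ⟨trivial, (g_zero (by norm_num)).symm⟩)
          (gr_conn _ g_cont.neg isPreconnected_Ioi)
          (gr_conn g g_cont isPreconnected_univ)) ?_ ?_ ?_
      · rintro p hp
        rw [mem_gr] at hp
        refine ⟨Or.inr hp.2, ?_⟩
        intro h
        rw [Set.mem_singleton_iff] at h
        rw [h] at hp
        exact absurd hp.1 (by simp)
      · rintro p (hp | hp) <;> rw [mem_gr] at hp
        · refine ⟨Or.inr hp.2, ?_⟩
          intro h
          rw [Set.mem_singleton_iff] at h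
          rw [h] at hp
          exact absurd hp.1 (by simp)
        · refine ⟨Or.inl hp.2, ?_⟩
          intro h
          rw [Set.mem_singleton_iff] at h
          rw [h] at hp
          have := g_pos hq1
          rw [hp.2] at hq2
          linarith
      · rintro p ⟨hpG, hpq⟩
        rcases hpG with h | h
        · exact Or.inr (Or.inr (mem_gr.2 ⟨trivial, h⟩))
        · rcases lt_trichotomy p.1 q.1 with h1 | h1 | h1
          · exact Or.inl (mem_gr.2 ⟨h1, h⟩)
          · exact absurd (Prod.ext h1 (by rw [h, h1, ← hq2])) (by simpa using hpq)
          · exact Or.inr (Or.inl (mem_gr.2 ⟨h1, h⟩))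
  · -- q.1 = 0 : then q = (0,0), contradiction
    have hg0 : g q.1 = 0 := g_zero hq1.ge
    have : q.2 = 0 := by rcases hqG with h | h <;> simp [h, hg0]
    exact hne (Prod.ext hq1 this)
  · -- q on the positive ray
    have hgq : g q.1 = 0 := g_zero hq1.le
    have hq2 : q.2 = 0 := by rcases hqG with h | h <;> simp [h, hgq]
    refine final ((fun x => (x, g x)) '' Set.Ioi q.1)
      ((fun x => (x, g x)) '' Set.Iio q.1 ∪ (fun x => (x, -g x)) '' Set.Iio q.1)
      (gr_conn g g_cont isPreconnected_Ioi)
      (IsPreconnected.union ((0:ℝ), (0:ℝ))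
        (mem_gr.2 ⟨by simpa using hq1, (g_zero le_rfl).symm⟩)
        (mem_gr.2 ⟨by simpa using hq1, by simp [g_zero (le_refl (0:ℝ))]⟩)
        (gr_conn g g_cont isPreconnected_Iio)
        (gr_conn _ g_cont.neg isPreconnected_Iio)) ?_ ?_ ?_
    · rintro p hp
      rw [mem_gr] at hp
      refine ⟨Or.inl hp.2, ?_⟩
      intro h
      rw [Set.mem_singleton_iff] at h
      rw [h] at hp
      exact absurd hp.1 (by simp)
    · rintro p (hp | hp) <;> rw [mem_gr] at hp
      · refine ⟨Or.inl hp.2, ?_⟩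
        intro h
        rw [Set.mem_singleton_iff] at h
        rw [h] at hp
        exact absurd hp.1 (by simp)
      · refine ⟨Or.inr hp.2, ?_⟩
        intro h
        rw [Set.mem_singleton_iff] at h
        rw [h] at hp
        exact absurd hp.1 (by simp)
    · rintro p ⟨hpG, hpq⟩
      rcases lt_trichotomy p.1 q.1 with h1 | h1 | h1
      · rcases hpG with h | h
        · exact Or.inr (Or.inl (mem_gr.2 ⟨h1, h⟩))
        · exact Or.inr (Or.inr (mem_gr.2 ⟨h1, h⟩))
      · exfalso
        have hp2 : p.2 = 0 := by
          rcases hpG with h | h <;> rw [h, h1, hgq] <;> simp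
        exact hpq (by rw [Set.mem_singleton_iff]; exact Prod.ext h1 (hp2.trans hq2.symm))
      · have hgp : g p.1 = 0 := g_zero (le_of_lt (lt_of_le_of_lt hq1.le h1))
        have hp2 : p.2 = g p.1 := by
          rcases hpG with h | h <;> rw [h, hgp] <;> simp
        exact Or.inl (mem_gr.2 ⟨h1, hp2⟩)
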